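/- arXiv:2006.01225 — 4 statements merged into one kernel-verified Lean document; each statement's English description precedes it below -/
import Mathlib

section
/- Let M be a rank-k positive semi-definite d×d real matrix and x a vector lying in the column space of M. Then (M + xxᵀ)⁺ = M⁺ - (M⁺ x xᵀ M⁺)/(1 + xᵀ M⁺ x), where ⁺ denotes the Moore–Penrose pseudoinverse. -/
open Matrix

/-- The four Moore–Penrose conditions characterizing the pseudoinverse. -/
def IsMoorePenroseInv {d : ℕ} (A B : Matrix (Fin d) (Fin d) ℝ) : Prop :=
  A * B * A = A ∧ B * A * B = B ∧ (A * B)ᵀ = A * B ∧ (B * A)ᵀ = B * A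

namespace IsMoorePenroseInv

variable {d : ℕ} {A P : Matrix (Fin d) (Fin d) ℝ}

theorem unique {B : Matrix (Fin d) (Fin d) ℝ} (hP : IsMoorePenroseInv A P)
    (hB : IsMoorePenroseInv A B) : P = B := by
  obtain ⟨hP₁, hP₂, hP₃, hP₄⟩ := hP
  obtain ⟨hB₁, hB₂, hB₃, hB₄⟩ := hB
  have hAP : A * P = A * B := by
    calc A * P = (A * B) * (A * P) := by rw [← Matrix.mul_assoc, hB₁]
    _ = ((A * P) * (A * B))ᵀ := by rw [transpose_mul, hP₃, hB₃]
    _ = A * B := by rw [← Matrix.mul_assoc, hP₁, hB₃]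
  have hPA : P * A = B * A := by
    calc P * A = (P * A) * (B * A) := by rw [Matrix.mul_assoc, ← Matrix.mul_assoc A, hB₁]
    _ = ((B * A) * (P * A))ᵀ := by rw [transpose_mul, hP₄, hB₄]
    _ = B * A := by rw [Matrix.mul_assoc, ← Matrix.mul_assoc A, hP₁, hB₄]
  calc P = P * A * P := hP₂.symm
  _ = B * A * B := by rw [hPA, Matrix.mul_assoc, hAP, ← Matrix.mul_assoc]
  _ = B := hB₂

/-- Sherman–Morrison for the pseudoinverse: the update is rank-one and stays inside the row and
column spaces of `A`, so `A * P` and `P * A` are unchanged. -/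
theorem add_vecMulVec {x y : Fin d → ℝ} (hP : IsMoorePenroseInv A P)
    (hx : (A * P) *ᵥ x = x) (hy : y ᵥ* (P * A) = y) (hs : 1 + y ⬝ᵥ (P *ᵥ x) ≠ 0) :
    IsMoorePenroseInv (A + vecMulVec x y)
      (P - (1 + y ⬝ᵥ (P *ᵥ x))⁻¹ • (P * vecMulVec x y * P)) := by
  obtain ⟨hP₁, hP₂, hP₃, hP₄⟩ := hP
  set X := vecMulVec x y
  set s := y ⬝ᵥ (P *ᵥ x)
  set B := P - (1 + s)⁻¹ • (P * X * P)
  have hAPX : A * P * X = X := by rw [mul_vecMulVec, hx]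
  have hXPA : X * (P * A) = X := by rw [vecMulVec_mul, hy]
  have hXPX : X * P * X = s • X := by
    rw [Matrix.mul_assoc, mul_vecMulVec, vecMulVec_mul_vecMulVec, vecMulVec_smul]
  have hAB : (A + X) * B = A * P := by
    have hR : (A + X) * (P * X * P) = (1 + s) • (X * P) := by
      rw [add_mul, add_smul, one_smul, ← Matrix.mul_assoc, ← Matrix.mul_assoc, hAPX,
        ← Matrix.mul_assoc, ← Matrix.mul_assoc, hXPX, Matrix.smul_mul]
    rw [mul_sub, Matrix.mul_smul, hR, inv_smul_smul₀ hs, add_mul, add_sub_cancel_right]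
  have hBA : B * (A + X) = P * A := by
    have hR : P * X * P * (A + X) = (1 + s) • (P * X) := by
      rw [mul_add, add_smul, one_smul, Matrix.mul_assoc, Matrix.mul_assoc, hXPA,
        Matrix.mul_assoc, Matrix.mul_assoc, ← Matrix.mul_assoc X, hXPX, Matrix.mul_smul]
    rw [sub_mul, Matrix.smul_mul, hR, inv_smul_smul₀ hs, mul_add, add_sub_cancel_right]
  refine ⟨?_, ?_, ?_, ?_⟩
  · rw [hAB, mul_add, hP₁, hAPX]
  · rw [hBA, mul_sub, Matrix.mul_smul, hP₂, ← Matrix.mul_assoc, ← Matrix.mul_assoc, hP₂]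
  · rw [hAB, hP₃]
  · rw [hBA, hP₄]

theorem mul_mulVec_mulVec (hP : IsMoorePenroseInv A P) (y : Fin d → ℝ) :
    (A * P) *ᵥ (A *ᵥ y) = A *ᵥ y := by
  rw [mulVec_mulVec, hP.1]

theorem mulVec_vecMul_mul (hP : IsMoorePenroseInv A P) (hA : A.IsSymm) (y : Fin d → ℝ) :
    (A *ᵥ y) ᵥ* (P * A) = A *ᵥ y := by
  rw [← vecMul_transpose, hA.eq, vecMul_vecMul, ← Matrix.mul_assoc, hP.1]

theorem dotProduct_mulVec_mulVec_nonneg (hP : IsMoorePenroseInv A P) (hA : A.PosSemidef)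
    (y : Fin d → ℝ) : 0 ≤ (A *ᵥ y) ⬝ᵥ (P *ᵥ (A *ᵥ y)) :=
  calc 0 ≤ y ⬝ᵥ (A *ᵥ y) := by simpa using hA.dotProduct_mulVec_nonneg y
  _ = (A *ᵥ y) ᵥ* (P * A) ⬝ᵥ y := by
    rw [hP.mulVec_vecMul_mul (isHermitian_iff_isSymm.mp hA.isHermitian), dotProduct_comm]
  _ = (A *ᵥ y) ⬝ᵥ (P *ᵥ (A *ᵥ y)) := by
    rw [dotProduct_mulVec, dotProduct_mulVec, vecMul_vecMul]

end IsMoorePenroseInv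

theorem pinv_rank_one_update_general
    {d : ℕ} (M : Matrix (Fin d) (Fin d) ℝ)
    (hM : M.PosSemidef)
    (x : Fin d → ℝ) (hx : ∃ y : Fin d → ℝ, M *ᵥ y = x)
    (P Q : Matrix (Fin d) (Fin d) ℝ)
    (hP : IsMoorePenroseInv M P)
    (hQ : IsMoorePenroseInv (M + Matrix.vecMulVec x x) Q) :
    Q = P - (1 + x ⬝ᵥ (P *ᵥ x))⁻¹ • (P * Matrix.vecMulVec x x * P) := by
  obtain ⟨y, rfl⟩ := hx
  have hs : 1 + (M *ᵥ y) ⬝ᵥ (P *ᵥ (M *ᵥ y)) ≠ 0 := by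
    linarith [hP.dotProduct_mulVec_mulVec_nonneg hM y]
  exact hQ.unique <| hP.add_vecMulVec (hP.mul_mulVec_mulVec y)
    (hP.mulVec_vecMul_mul (isHermitian_iff_isSymm.mp hM.isHermitian) y) hs

theorem pinv_rank_one_update
    {d k : ℕ} (M : Matrix (Fin d) (Fin d) ℝ)
    (hM : M.PosSemidef) (hrank : M.rank = k)
    (x : Fin d → ℝ) (hx : ∃ y : Fin d → ℝ, M *ᵥ y = x)
    (P Q : Matrix (Fin d) (Fin d) ℝ)
    (hP : IsMoorePenroseInv M P)
    (hQ : IsMoorePenroseInv (M + Matrix.vecMulVec x x) Q) :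
    Q = P - (1 + x ⬝ᵥ (P *ᵥ x))⁻¹ • (P * Matrix.vecMulVec x x * P) :=
  pinv_rank_one_update_general M hM x hx P Q hP hQ
end

section
/- For any real p ≥ 2, any i ≥ 1, and nonzero vectors a₁,…,aᵢ ∈ ℝ^d, the online sensitivity sup_{x: Aᵢx ≠ 0} |aᵢᵀx|^p / Σ_{j=1}^{i} |aⱼᵀx|^p is at most min{1, i^{p/2-1} (aᵢᵀ(AᵢᵀAᵢ)⁺ aᵢ)^{p/2}}, where Aᵢ is the i×d matrix with rows a₁ᵀ,…,aᵢᵀ. -/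
/-!
Write `aᵢ = Aᵀeᵢ`. Since `(AᵀA)(AᵀA)⁺Aᵀ = Aᵀ`, the vector `z = A(AᵀA)⁺aᵢ`
satisfies `Aᵀz = aᵢ`, so `aᵢᵀx = ⟨z, Ax⟩` and `‖z‖² = aᵢᵀ(AᵀA)⁺aᵢ`.
Cauchy–Schwarz gives `|aᵢᵀx|² ≤ aᵢᵀ(AᵀA)⁺aᵢ · ‖Ax‖₂²`, and the power-mean
inequality `‖Ax‖₂^p ≤ i^{p/2-1} ∑ⱼ |aⱼᵀx|^p` finishes the second bound;
the first is trivial.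
-/

open Matrix Finset

theorem Matrix.mul_eq_zero_of_transpose_mul_self_mul_eq_zero {m n k : Type*} [Fintype m]
    [Fintype n] (A : Matrix m n ℝ) {X : Matrix n k ℝ} (h : Aᵀ * A * X = 0) : A * X = 0 :=
  (conjTranspose_mul_self_mul_eq_zero A X).1 (by rwa [conjTranspose_eq_transpose_of_trivial])

theorem Matrix.dotProduct_sq_le_dotProduct_self_mul {n : Type*} [Fintype n] (v w : n → ℝ) :
    (v ⬝ᵥ w) ^ 2 ≤ (v ⬝ᵥ v) * (w ⬝ᵥ w) := by
  simpa only [dotProduct, sq] using sum_mul_sq_le_sq_mul_sq univ v w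

theorem Real.abs_rpow_eq_sq_rpow_half (u p : ℝ) : |u| ^ p = (u ^ 2) ^ (p / 2) := by
  rw [← sq_abs, ← Real.rpow_natCast, ← Real.rpow_mul (abs_nonneg u)]
  norm_num [mul_div_cancel₀]

namespace IsMoorePenroseInv

variable {m : Type*} [Fintype m] {d : ℕ} {A : Matrix m (Fin d) ℝ}
  {P : Matrix (Fin d) (Fin d) ℝ}

theorem gram_mul_mul_transpose (hP : IsMoorePenroseInv (Aᵀ * A) P) :
    Aᵀ * A * P * Aᵀ = Aᵀ := by
  -- `X = QP - 1` is symmetric with `XQ = 0`, so `QX = AᵀAX = 0`, hence `AX = 0`.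
  obtain ⟨hQPQ, -, hQP, -⟩ := hP
  set Q := Aᵀ * A with hQ
  have hQT : Qᵀ = Q := by rw [hQ, transpose_mul, transpose_transpose]
  have hXT : (Q * P - 1)ᵀ = Q * P - 1 := by rw [transpose_sub, hQP, transpose_one]
  have hXQ : (Q * P - 1) * Q = 0 := by rw [Matrix.sub_mul, hQPQ, Matrix.one_mul, sub_self]
  have hQX : Q * (Q * P - 1) = 0 := by
    simpa only [transpose_mul, hQT, hXT, transpose_zero] using congrArg transpose hXQ
  have hAQP : A * (Q * P) = A := by
    have := A.mul_eq_zero_of_transpose_mul_self_mul_eq_zero hQX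
    rwa [Matrix.mul_sub, Matrix.mul_one, sub_eq_zero] at this
  rw [← hQP, ← transpose_mul, hAQP]

theorem transpose_mulVec_mulVec_row (hP : IsMoorePenroseInv (Aᵀ * A) P) (j : m) :
    Aᵀ *ᵥ (A *ᵥ (P *ᵥ A j)) = A j := by
  classical
  have hcol : Aᵀ *ᵥ Pi.single j 1 = A j := by rw [mulVec_single_one]; rfl
  rw [← hcol]
  simp only [mulVec_mulVec, ← Matrix.mul_assoc, hP.gram_mul_mul_transpose]

theorem row_dotProduct_eq (hP : IsMoorePenroseInv (Aᵀ * A) P) (j : m) (v : Fin d → ℝ) :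
    A j ⬝ᵥ v = (A *ᵥ (P *ᵥ A j)) ⬝ᵥ (A *ᵥ v) := by
  conv_lhs => rw [← hP.transpose_mulVec_mulVec_row j]
  rw [dotProduct_mulVec, mulVec_transpose]

theorem row_dotProduct_mulVec_row_nonneg (hP : IsMoorePenroseInv (Aᵀ * A) P) (j : m) :
    0 ≤ A j ⬝ᵥ (P *ᵥ A j) := by
  rw [hP.row_dotProduct_eq j]
  exact sum_nonneg fun _ _ => mul_self_nonneg _

theorem sq_row_dotProduct_le (hP : IsMoorePenroseInv (Aᵀ * A) P) (j : m) (x : Fin d → ℝ) :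
    (A j ⬝ᵥ x) ^ 2 ≤ (A j ⬝ᵥ (P *ᵥ A j)) * ∑ k, (A k ⬝ᵥ x) ^ 2 := by
  have hnorm : ∑ k, (A k ⬝ᵥ x) ^ 2 = (A *ᵥ x) ⬝ᵥ (A *ᵥ x) := by
    simp only [dotProduct, sq]; rfl
  rw [hnorm, hP.row_dotProduct_eq j x, hP.row_dotProduct_eq j (P *ᵥ A j)]
  exact dotProduct_sq_le_dotProduct_self_mul _ _

theorem abs_row_dotProduct_rpow_le (hP : IsMoorePenroseInv (Aᵀ * A) P) {p : ℝ} (hp : 2 ≤ p)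
    (j : m) (x : Fin d → ℝ) :
    |A j ⬝ᵥ x| ^ p ≤
      (Fintype.card m : ℝ) ^ (p / 2 - 1) * (A j ⬝ᵥ (P *ᵥ A j)) ^ (p / 2)
        * ∑ k, |A k ⬝ᵥ x| ^ p := by
  have hsq : ∀ k ∈ univ, 0 ≤ (A k ⬝ᵥ x) ^ 2 := fun _ _ => sq_nonneg _
  calc |A j ⬝ᵥ x| ^ p = ((A j ⬝ᵥ x) ^ 2) ^ (p / 2) := Real.abs_rpow_eq_sq_rpow_half _ _
    _ ≤ ((A j ⬝ᵥ (P *ᵥ A j)) * ∑ k, (A k ⬝ᵥ x) ^ 2) ^ (p / 2) :=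
        Real.rpow_le_rpow (sq_nonneg _) (hP.sq_row_dotProduct_le j x) (by linarith)
    _ = (A j ⬝ᵥ (P *ᵥ A j)) ^ (p / 2) * (∑ k, (A k ⬝ᵥ x) ^ 2) ^ (p / 2) :=
        Real.mul_rpow (hP.row_dotProduct_mulVec_row_nonneg j) (sum_nonneg hsq)
    _ ≤ (A j ⬝ᵥ (P *ᵥ A j)) ^ (p / 2)
          * ((Fintype.card m : ℝ) ^ (p / 2 - 1) * ∑ k, ((A k ⬝ᵥ x) ^ 2) ^ (p / 2)) := by
        gcongr
        · exact Real.rpow_nonneg (hP.row_dotProduct_mulVec_row_nonneg j) _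
        · exact Real.rpow_sum_le_const_mul_sum_rpow_of_nonneg univ (by linarith) hsq
    _ = _ := by simp only [← Real.abs_rpow_eq_sq_rpow_half]; ring

end IsMoorePenroseInv

theorem online_sensitivity_le_general
    {d n : ℕ} (p : ℝ) (hp : 2 ≤ p)
    (a : Fin (n + 1) → Fin d → ℝ)
    (A : Matrix (Fin (n + 1)) (Fin d) ℝ) (hA : ∀ j, A j = a j)
    (P : Matrix (Fin d) (Fin d) ℝ) (hP : IsMoorePenroseInv (Aᵀ * A) P) :
    ∀ x : Fin d → ℝ, A *ᵥ x ≠ 0 →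
      |a (Fin.last n) ⬝ᵥ x| ^ p / ∑ j, |a j ⬝ᵥ x| ^ p
        ≤ min 1 (((n : ℝ) + 1) ^ (p / 2 - 1)
            * (a (Fin.last n) ⬝ᵥ (P *ᵥ a (Fin.last n))) ^ (p / 2)) := by
  obtain rfl : A = a := funext hA
  intro x _
  have hsum : 0 ≤ ∑ j, |A j ⬝ᵥ x| ^ p := sum_nonneg fun _ _ => by positivity
  have hlast : |A (Fin.last n) ⬝ᵥ x| ^ p ≤ ∑ j, |A j ⬝ᵥ x| ^ p :=
    single_le_sum (f := fun j => |A j ⬝ᵥ x| ^ p) (fun _ _ => by positivity) (mem_univ _)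
  refine le_min (div_le_one_of_le₀ hlast hsum)
    (div_le_of_le_mul₀ hsum
      (mul_nonneg (by positivity) (Real.rpow_nonneg (hP.row_dotProduct_mulVec_row_nonneg _) _)) ?_)
  simpa using hP.abs_row_dotProduct_rpow_le hp (Fin.last n) x

/-- Online sensitivity bound: with `i = n + 1` rows `a 0, …, a (n)` (all nonzero),
`A` the `i × d` matrix of these rows and `P = (AᵀA)⁺`, the online sensitivity of
the last row is at most `min {1, i^{p/2-1} (aᵢᵀ(AᵀA)⁺aᵢ)^{p/2}}`. -/
theorem online_sensitivity_le
    {d n : ℕ} (p : ℝ) (hp : 2 ≤ p)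
    (a : Fin (n + 1) → Fin d → ℝ) (ha : ∀ j, a j ≠ 0)
    (A : Matrix (Fin (n + 1)) (Fin d) ℝ) (hA : ∀ j, A j = a j)
    (P : Matrix (Fin d) (Fin d) ℝ) (hP : IsMoorePenroseInv (Aᵀ * A) P) :
    ∀ x : Fin d → ℝ, A *ᵥ x ≠ 0 →
      |a (Fin.last n) ⬝ᵥ x| ^ p / ∑ j, |a j ⬝ᵥ x| ^ p
        ≤ min 1 (((n : ℝ) + 1) ^ (p / 2 - 1)
            * (a (Fin.last n) ⬝ᵥ (P *ᵥ a (Fin.last n))) ^ (p / 2)) :=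
  online_sensitivity_le_general p hp a A hA P hP
end

section
/- Let X ∈ ℝ^{k×k} be symmetric positive definite and b ∈ ℝ^k. Define e = bᵀ(X + bbᵀ)^{-1} b. Then 0 ≤ e ≤ 1 and det(X + bbᵀ) = det(X)(1 + bᵀX^{-1}b) ≥ det(X)·(1 + e) ≥ det(X)·exp(e/2). -/
open Matrix

/-- Matrix determinant lemma chain: for symmetric positive definite `X` and
`e = bᵀ(X+bbᵀ)⁻¹b`, one has `0 ≤ e ≤ 1` and
`det(X+bbᵀ) = det X (1 + bᵀX⁻¹b) ≥ det X (1+e) ≥ det X exp(e/2)`. -/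
theorem det_rank_one_update_chain
    {k : ℕ} (X : Matrix (Fin k) (Fin k) ℝ) (hX : X.PosDef)
    (b : Fin k → ℝ)
    (e : ℝ) (he : e = b ⬝ᵥ ((X + vecMulVec b b)⁻¹ *ᵥ b)) :
    0 ≤ e ∧ e ≤ 1 ∧
    (X + vecMulVec b b).det = X.det * (1 + b ⬝ᵥ (X⁻¹ *ᵥ b)) ∧
    X.det * (1 + b ⬝ᵥ (X⁻¹ *ᵥ b)) ≥ X.det * (1 + e) ∧
    X.det * (1 + e) ≥ X.det * Real.exp (e / 2) := by
  have hP : (vecMulVec b b).PosSemidef := by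
    have := Matrix.posSemidef_self_mul_conjTranspose (Matrix.replicateCol Unit b)
    rwa [Matrix.conjTranspose_replicateCol, star_trivial, ← Matrix.vecMulVec_eq Unit] at this
  have hA : (X + vecMulVec b b).PosDef := hX.add_posSemidef hP
  set A := X + vecMulVec b b with hAdef
  set t := b ⬝ᵥ (X⁻¹ *ᵥ b) with htdef
  have ht0 : 0 ≤ t := by
    have := hX.inv.posSemidef.dotProduct_mulVec_nonneg b
    simpa [htdef] using this
  have h1t : (0:ℝ) < 1 + t := by linarith
  -- Sherman–Morrison style computation
  have hXinv : X * X⁻¹ = 1 := Matrix.mul_nonsing_inv X (isUnit_iff_ne_zero.mpr hX.det_pos.ne')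
  have hvm : vecMulVec b b *ᵥ (X⁻¹ *ᵥ b) = t • b := by
    funext i
    simp only [Matrix.mulVec, Matrix.vecMulVec_apply, dotProduct, Pi.smul_apply,
      smul_eq_mul, htdef]
    rw [Finset.sum_congr rfl (fun j _ => mul_assoc (b i) (b j) _), ← Finset.mul_sum]
    ring
  have hkey : A *ᵥ (X⁻¹ *ᵥ b) = (1 + t) • b := by
    rw [hAdef, Matrix.add_mulVec, hvm, Matrix.mulVec_mulVec, hXinv, Matrix.one_mulVec]
    funext i; simp [add_smul]; ring
  have hAinv : A⁻¹ *ᵥ b = (1 + t)⁻¹ • (X⁻¹ *ᵥ b) := by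
    have h2 : A⁻¹ *ᵥ (A *ᵥ (X⁻¹ *ᵥ b)) = X⁻¹ *ᵥ b := by
      rw [Matrix.mulVec_mulVec, Matrix.nonsing_inv_mul A (isUnit_iff_ne_zero.mpr hA.det_pos.ne'), Matrix.one_mulVec]
    rw [hkey, Matrix.mulVec_smul] at h2
    rw [← h2, smul_smul, inv_mul_cancel₀ (ne_of_gt h1t), one_smul]
  have hee : e = t / (1 + t) := by
    rw [he, hAinv, dotProduct_smul, smul_eq_mul, ← htdef]
    ring
  have he0 : 0 ≤ e := by rw [hee]; positivity
  have he1 : e ≤ 1 := by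
    rw [hee, div_le_one h1t]; linarith
  have het : e ≤ t := by
    rw [hee, div_le_iff₀ h1t]; nlinarith
  -- determinant lemma
  have hdet : A.det = X.det * (1 + t) := by
    rw [hAdef, Matrix.vecMulVec_eq Unit, Matrix.det_add_replicateCol_mul_replicateRow (isUnit_iff_ne_zero.mpr hX.det_pos.ne')]
    congr 1
    rw [Matrix.det_unique, Matrix.add_apply, Matrix.one_apply_eq,
      Matrix.mul_assoc, ← Matrix.replicateCol_mulVec, Matrix.replicateRow_mul_replicateCol_apply]
  have hdX : 0 < X.det := hX.det_pos
  refine ⟨he0, he1, hdet, ?_, ?_⟩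
  · apply mul_le_mul_of_nonneg_left (by linarith) hdX.le
  · apply mul_le_mul_of_nonneg_left ?_ hdX.le
    have h := Real.add_one_le_exp (-(e / 2))
    rw [Real.exp_neg] at h
    have hp := Real.exp_pos (e / 2)
    have h2 := mul_le_mul_of_nonneg_left h hp.le
    rw [mul_inv_cancel₀ hp.ne'] at h2
    nlinarith
end

section
/- Let p > 2 be real, n ≥ 1, and e₁,…,eₙ ∈ [0,1] with Σᵢ eᵢ ≤ S. Then Σ_{i=1}^n min{1, n^{p/2-1} eᵢ^{p/2}} ≤ 2 n^{1-2/p} S, i.e., the sum is O(n^{1-2/p} S). -/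
theorem sum_min_one_le
    {n : ℕ} (hn : 1 ≤ n) (p : ℝ) (hp : 2 < p)
    (e : Fin n → ℝ) (he0 : ∀ i, 0 ≤ e i) (he1 : ∀ i, e i ≤ 1)
    (S : ℝ) (hS : ∑ i, e i ≤ S) :
    ∑ i, min 1 ((n : ℝ) ^ (p / 2 - 1) * e i ^ (p / 2))
      ≤ 2 * (n : ℝ) ^ (1 - 2 / p) * S := by
  have hn1 : (1:ℝ) ≤ n := by exact_mod_cast hn
  have hn0 : (0:ℝ) < n := lt_of_lt_of_le one_pos hn1
  have hp0 : (0:ℝ) < p := by linarith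
  have key : ∀ i, min 1 ((n : ℝ) ^ (p / 2 - 1) * e i ^ (p / 2))
      ≤ (n : ℝ) ^ (1 - 2 / p) * e i := by
    intro i
    set x := e i with hx
    have hx0 : 0 ≤ x := he0 i
    by_cases h : (n:ℝ) ^ (2 / p - 1) ≤ x
    · refine le_trans (min_le_left _ _) ?_
      have h1 : (n:ℝ) ^ (1 - 2 / p) * (n:ℝ) ^ (2 / p - 1) ≤ (n:ℝ) ^ (1 - 2 / p) * x :=
        mul_le_mul_of_nonneg_left h (Real.rpow_nonneg hn0.le _)
      have h2 : (n:ℝ) ^ (1 - 2 / p) * (n:ℝ) ^ (2 / p - 1) = 1 := by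
        rw [← Real.rpow_add hn0]
        norm_num
      linarith
    · push_neg at h
      refine le_trans (min_le_right _ _) ?_
      rcases eq_or_lt_of_le hx0 with h0 | h0
      · rw [← h0, Real.zero_rpow (by positivity : p / 2 ≠ 0)]
        simp
      · have hsplit : x ^ (p / 2) = x ^ (p / 2 - 1) * x := by
          have h2 : p / 2 = (p / 2 - 1) + 1 := by ring
          rw [h2, Real.rpow_add h0, Real.rpow_one]; ring_nf
        rw [hsplit]
        have hb : x ^ (p / 2 - 1) ≤ ((n:ℝ) ^ (2 / p - 1)) ^ (p / 2 - 1) :=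
          Real.rpow_le_rpow hx0 h.le (by linarith : (0:ℝ) ≤ p / 2 - 1)
        have hc : (n:ℝ) ^ (p / 2 - 1) * ((n:ℝ) ^ (2 / p - 1)) ^ (p / 2 - 1)
            = (n:ℝ) ^ (1 - 2 / p) := by
          have hexp : (p / 2 - 1) + (2 / p - 1) * (p / 2 - 1) = 1 - 2 / p := by
            field_simp
            ring
          rw [← Real.rpow_mul hn0.le, ← Real.rpow_add hn0, hexp]
        calc (n:ℝ) ^ (p / 2 - 1) * (x ^ (p / 2 - 1) * x)
            ≤ (n:ℝ) ^ (p / 2 - 1) * (((n:ℝ) ^ (2 / p - 1)) ^ (p / 2 - 1) * x) := by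
              apply mul_le_mul_of_nonneg_left _ (Real.rpow_nonneg hn0.le _)
              exact mul_le_mul_of_nonneg_right hb hx0
          _ = (n:ℝ) ^ (1 - 2 / p) * x := by rw [← mul_assoc, hc]
  calc ∑ i, min 1 ((n : ℝ) ^ (p / 2 - 1) * e i ^ (p / 2))
      ≤ ∑ i, (n : ℝ) ^ (1 - 2 / p) * e i := Finset.sum_le_sum fun i _ => key i
    _ = (n : ℝ) ^ (1 - 2 / p) * ∑ i, e i := by rw [Finset.mul_sum]
    _ ≤ (n : ℝ) ^ (1 - 2 / p) * S :=
        mul_le_mul_of_nonneg_left hS (Real.rpow_nonneg hn0.le _)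
    _ ≤ 2 * (n : ℝ) ^ (1 - 2 / p) * S := by
        have hS0 : 0 ≤ S := le_trans (Finset.sum_nonneg fun i _ => he0 i) hS
        have := Real.rpow_nonneg hn0.le (1 - 2 / p)
        nlinarith
end
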